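/- arXiv:2407.13865 — 6 statements merged into one kernel-verified Lean document; each statement's English description precedes it below -/
import Mathlib

section
/- Let p, K, K̃ be positive integers with K < p and K̃ < p, and let μ, μ̃ ∈ ℝ. Let g₁,…,g_K and g̃₁,…,g̃_{K̃} be continuous functions ℝ → ℝ and let γ₁,…,γ_K and γ̃₁,…,γ̃_{K̃} be unit vectors in ℝ^p, such that ({g_k}, Γ) and ({g̃_l}, Γ̃) each satisfy Condition 1. If for every symmetric matrix M ∈ ℝ^{p×p} one has μ + g₁(γ₁ᵀMγ₁) + ⋯ + g_K(γ_KᵀMγ_K) = μ̃ + g̃₁(γ̃₁ᵀMγ̃₁) + ⋯ + g̃_{K̃}(γ̃_{K̃}ᵀMγ̃_{K̃}), then: (a) μ = μ̃; (b) K = K̃; and (c) there exist a permutation π of {1,…,K} and signs ε_j ∈ {−1, 1} such that γ_j = ε_j γ̃_{π(j)} and g_j = g̃_{π(j)} for every j ∈ {1,…,K}. -/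
open Matrix

/-!
Let `x` be a biorthogonal family of `γ` (it exists because `Γ` has full column rank). Testing the
identity on the symmetric matrix `symOuter w (x k)` isolates one ridge function:
`g k (γ k ⬝ᵥ w) = ∑ l, g' l ((γ' l ⬝ᵥ w) * (γ' l ⬝ᵥ x k))` for every `w`.

If `γ k` is not `±γ' l` for any `l`, there are `z, a` with `γ k ⬝ᵥ z = γ k ⬝ᵥ a = 1` such that
every `γ' l` is orthogonal to one of them; the identity at `w = t • z + s • a` makes `g k`
additive, hence linear. Applied to the primed side, this shows that at most one `γ' l` is unmatched,
and the identity at a `w` orthogonal to that one forces `g k = 0`. So every direction is matched up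
to sign, biorthogonality makes the matching a bijection, and the identity at `w = (u * ε) • x' l`
gives `g k = g' l`.
-/

section Biorthogonal

variable {ι m : Type*} [Fintype m] [DecidableEq ι]

def IsBiorthogonal (γ x : ι → m → ℝ) : Prop :=
  ∀ k j, γ k ⬝ᵥ x j = if k = j then 1 else 0

theorem exists_isBiorthogonal_of_rank [Fintype ι] (γ : ι → m → ℝ)
    (h : (Matrix.of fun i k => γ k i).rank = Fintype.card ι) : ∃ x, IsBiorthogonal γ x := by
  set Γ : Matrix m ι ℝ := Matrix.of fun i k => γ k i
  have hG : IsUnit (Γᵀ * Γ).det := by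
    rw [← Matrix.isUnit_iff_isUnit_det, ← linearIndependent_rows_iff_isUnit,
      linearIndependent_iff_card_eq_finrank_span, Set.finrank, ← Matrix.rank_eq_finrank_span_row,
      Matrix.rank_transpose_mul_self, h]
  refine ⟨fun j i => (Γ * (Γᵀ * Γ)⁻¹) i j, fun k j => ?_⟩
  have := congrFun₂ (Matrix.mul_nonsing_inv _ hG) k j
  rwa [Matrix.mul_assoc, Matrix.mul_apply, Matrix.one_apply] at this

theorem IsBiorthogonal.eq_of_eq_smul {γ x : ι → m → ℝ} (hx : IsBiorthogonal γ x) {i j : ι}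
    {c : ℝ} (h : γ i = c • γ j) : i = j := by
  by_contra hij
  have := hx i i
  rw [h, smul_dotProduct, hx, if_neg (Ne.symm hij)] at this
  simp at this

theorem IsBiorthogonal.exists_dotProduct_eq_one [Fintype ι] {γ x : ι → m → ℝ}
    (hx : IsBiorthogonal γ x) {v : m → ℝ} (hv : v ⬝ᵥ v = 1) (hvx : ∀ k, v ⬝ᵥ x k = 0) :
    ∃ a, v ⬝ᵥ a = 1 ∧ ∀ k, γ k ⬝ᵥ a = 0 := by
  refine ⟨v - ∑ j, (γ j ⬝ᵥ v) • x j, ?_, fun k => ?_⟩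
  · simp [dotProduct_sub, dotProduct_sum, dotProduct_smul, hv, hvx]
  · simp [dotProduct_sub, dotProduct_sum, dotProduct_smul, hx k]

end Biorthogonal

section EqUpToSign

variable {m : Type*}

def EqUpToSign (v w : m → ℝ) : Prop :=
  ∃ ε : ℝ, (ε = 1 ∨ ε = -1) ∧ v = ε • w

theorem EqUpToSign.symm {v w : m → ℝ} (h : EqUpToSign v w) : EqUpToSign w v := by
  obtain ⟨ε, hε, rfl⟩ := h
  refine ⟨ε, hε, ?_⟩
  rw [smul_smul, mul_self_eq_one_iff.mpr hε, one_smul]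

theorem EqUpToSign.trans {u v w : m → ℝ} (huv : EqUpToSign u v) (hvw : EqUpToSign v w) :
    EqUpToSign u w := by
  obtain ⟨ε, hε, rfl⟩ := huv
  obtain ⟨δ, hδ, rfl⟩ := hvw
  refine ⟨ε * δ, ?_, by rw [smul_smul]⟩
  rcases hε with rfl | rfl <;> rcases hδ with rfl | rfl <;> norm_num

theorem exists_dotProduct_eq_one_of_not_eqUpToSign [Fintype m] {v w : m → ℝ} (hv : v ⬝ᵥ v = 1)
    (hw : w ⬝ᵥ w = 1) (h : ¬EqUpToSign v w) : ∃ z, v ⬝ᵥ z = 1 ∧ w ⬝ᵥ z = 0 := by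
  set c := v ⬝ᵥ w
  set z₀ := v - c • w
  have hwz : w ⬝ᵥ z₀ = 0 := by
    simp [z₀, c, dotProduct_sub, dotProduct_smul, hw, dotProduct_comm w v]
  have hvz : v ⬝ᵥ z₀ = z₀ ⬝ᵥ z₀ := by
    conv_rhs => rw [sub_dotProduct, smul_dotProduct, hwz]
    simp [z₀]
  have hz₀ : v ⬝ᵥ z₀ ≠ 0 := by
    intro h₀
    rw [hvz, dotProduct_self_eq_zero, sub_eq_zero] at h₀
    refine h ⟨c, mul_self_eq_one_iff.mp ?_, h₀⟩
    rw [h₀, smul_dotProduct, dotProduct_smul, hw] at hv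
    simpa using hv
  exact ⟨(v ⬝ᵥ z₀)⁻¹ • z₀, by rw [dotProduct_smul, smul_eq_mul, inv_mul_cancel₀ hz₀],
    by rw [dotProduct_smul, hwz, smul_zero]⟩

theorem IsBiorthogonal.exists_separating_pair {ι : Type*} [Fintype ι] [DecidableEq ι] [Fintype m]
    {γ x : ι → m → ℝ} (hx : IsBiorthogonal γ x) (hγ : ∀ k, γ k ⬝ᵥ γ k = 1) {v : m → ℝ}
    (hv : v ⬝ᵥ v = 1) (h : ∀ k, ¬EqUpToSign v (γ k)) :
    ∃ z a, v ⬝ᵥ z = 1 ∧ v ⬝ᵥ a = 1 ∧ ∀ k, γ k ⬝ᵥ z = 0 ∨ γ k ⬝ᵥ a = 0 := by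
  by_cases hvx : ∃ j, v ⬝ᵥ x j ≠ 0
  · obtain ⟨j, hj⟩ := hvx
    obtain ⟨z, hvz, hjz⟩ := exists_dotProduct_eq_one_of_not_eqUpToSign hv (hγ j) (h j)
    refine ⟨z, (v ⬝ᵥ x j)⁻¹ • x j, hvz, by rw [dotProduct_smul, smul_eq_mul, inv_mul_cancel₀ hj],
      fun k => ?_⟩
    by_cases hkj : k = j
    · exact Or.inl (hkj ▸ hjz)
    · exact Or.inr (by rw [dotProduct_smul, hx, if_neg hkj, smul_zero])
  · push Not at hvx
    obtain ⟨a, hva, hγa⟩ := hx.exists_dotProduct_eq_one hv hvx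
    exact ⟨a, a, hva, hva, fun k => Or.inl (hγa k)⟩

theorem IsBiorthogonal.exists_equiv_eqUpToSign {ι ι' : Type*} [DecidableEq ι] [DecidableEq ι']
    [Fintype m] {γ x : ι → m → ℝ} {γ' x' : ι' → m → ℝ} (hx : IsBiorthogonal γ x)
    (hx' : IsBiorthogonal γ' x') (h : ∀ k, ∃ l, EqUpToSign (γ k) (γ' l))
    (h' : ∀ l, ∃ k, EqUpToSign (γ' l) (γ k)) : ∃ π : ι ≃ ι', ∀ k, EqUpToSign (γ k) (γ' (π k)) := by
  choose π hπ using h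
  choose π' hπ' using h'
  refine ⟨⟨π, π', fun k => ?_, fun l => ?_⟩, hπ⟩
  · obtain ⟨ε, -, he⟩ := (hπ k).trans (hπ' (π k))
    exact (hx.eq_of_eq_smul he).symm
  · obtain ⟨ε, -, he⟩ := (hπ' l).trans (hπ (π' l))
    exact (hx'.eq_of_eq_smul he).symm

end EqUpToSign

theorem exists_eq_mul_of_continuous_of_map_add {f : ℝ → ℝ} (hf : Continuous f)
    (hadd : ∀ t s, f (t + s) = f t + f s) : ∃ a, ∀ u, f u = a * u :=
  ⟨f 1, fun u => by simpa [mul_comm] using map_real_smul (AddMonoidHom.mk' f hadd) hf u 1⟩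

section AdditiveIndex

variable {ι m : Type*}

noncomputable def symOuter (w y : m → ℝ) : Matrix m m ℝ :=
  (2 : ℝ)⁻¹ • (vecMulVec w y + vecMulVec y w)

theorem symOuter_isSymm (w y : m → ℝ) : (symOuter w y).IsSymm := by
  simp [symOuter, Matrix.IsSymm, Matrix.transpose_add, add_comm]

variable [Fintype ι] [Fintype m]

def additiveIndex (g : ι → ℝ → ℝ) (γ : ι → m → ℝ) (M : Matrix m m ℝ) : ℝ :=
  ∑ k, g k (γ k ⬝ᵥ M *ᵥ γ k)

theorem dotProduct_mulVec_symOuter (v w y : m → ℝ) :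
    v ⬝ᵥ symOuter w y *ᵥ v = (v ⬝ᵥ w) * (v ⬝ᵥ y) := by
  simp [symOuter, Matrix.add_mulVec, Matrix.smul_mulVec, vecMulVec_mulVec, dotProduct_comm]
  ring

theorem additiveIndex_symOuter (g : ι → ℝ → ℝ) (γ : ι → m → ℝ) (w y : m → ℝ) :
    additiveIndex g γ (symOuter w y) = ∑ k, g k ((γ k ⬝ᵥ w) * (γ k ⬝ᵥ y)) := by
  simp only [additiveIndex, dotProduct_mulVec_symOuter]

theorem IsBiorthogonal.additiveIndex_symOuter [DecidableEq ι] {g : ι → ℝ → ℝ} {γ x : ι → m → ℝ}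
    (hx : IsBiorthogonal γ x) (hg0 : ∀ k, g k 0 = 0) (w : m → ℝ) (k : ι) :
    additiveIndex g γ (symOuter w (x k)) = g k (γ k ⬝ᵥ w) := by
  rw [_root_.additiveIndex_symOuter, Finset.sum_eq_single k]
  · rw [hx, if_pos rfl, mul_one]
  · intro j _ hj
    rw [hx, if_neg hj, mul_zero, hg0]
  · simp

end AdditiveIndex

section Identifiability

variable {ι ι' m : Type*} [Fintype ι] [Fintype ι'] [Fintype m] [DecidableEq ι]
  {g : ι → ℝ → ℝ} {g' : ι' → ℝ → ℝ} {γ x : ι → m → ℝ} {γ' x' : ι' → m → ℝ}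

theorem apply_dotProduct_eq_sum
    (E : ∀ M : Matrix m m ℝ, M.IsSymm → additiveIndex g γ M = additiveIndex g' γ' M)
    (hx : IsBiorthogonal γ x) (hg0 : ∀ k, g k 0 = 0) (k : ι) (w : m → ℝ) :
    g k (γ k ⬝ᵥ w) = ∑ l, g' l ((γ' l ⬝ᵥ w) * (γ' l ⬝ᵥ x k)) := by
  rw [← hx.additiveIndex_symOuter hg0, E _ (symOuter_isSymm _ _), additiveIndex_symOuter]

variable [DecidableEq ι']
  (E : ∀ M : Matrix m m ℝ, M.IsSymm → additiveIndex g γ M = additiveIndex g' γ' M)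
  (hx : IsBiorthogonal γ x) (hx' : IsBiorthogonal γ' x')
  (hg0 : ∀ k, g k 0 = 0) (hg'0 : ∀ l, g' l 0 = 0)
include E hx hx' hg0 hg'0

theorem eq_of_eqUpToSign {k : ι} {l : ι'} (h : EqUpToSign (γ k) (γ' l)) : g k = g' l := by
  obtain ⟨ε, hε, hkl⟩ := h
  have hεε : ε * ε = 1 := mul_self_eq_one_iff.mpr hε
  have hlk : γ' l = ε • γ k := by rw [hkl, smul_smul, hεε, one_smul]
  have hkl' : γ k ⬝ᵥ x' l = ε := by rw [hkl, smul_dotProduct, hx', if_pos rfl, smul_eq_mul, mul_one]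
  have hlk' : γ' l ⬝ᵥ x k = ε := by rw [hlk, smul_dotProduct, hx, if_pos rfl, smul_eq_mul, mul_one]
  funext u
  have key := apply_dotProduct_eq_sum E hx hg0 k ((u * ε) • x' l)
  rw [Finset.sum_eq_single l] at key
  · rwa [dotProduct_smul, dotProduct_smul, hkl', hx', if_pos rfl, hlk', smul_eq_mul, smul_eq_mul,
      mul_one, mul_assoc, hεε, mul_one] at key
  · intro j _ hj
    rw [dotProduct_smul, hx', if_neg hj, smul_zero, zero_mul, hg'0]
  · simp

theorem map_add_of_forall_not_eqUpToSign (hγ' : ∀ l, γ' l ⬝ᵥ γ' l = 1) {k : ι}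
    (hk : γ k ⬝ᵥ γ k = 1) (h : ∀ l, ¬EqUpToSign (γ k) (γ' l)) (t s : ℝ) :
    g k (t + s) = g k t + g k s := by
  obtain ⟨z, a, hz, ha, hza⟩ := hx'.exists_separating_pair hγ' hk h
  have key := apply_dotProduct_eq_sum E hx hg0 k
  have hsplit : ∀ l, g' l ((γ' l ⬝ᵥ (t • z + s • a)) * (γ' l ⬝ᵥ x k)) =
      g' l ((γ' l ⬝ᵥ t • z) * (γ' l ⬝ᵥ x k)) + g' l ((γ' l ⬝ᵥ s • a) * (γ' l ⬝ᵥ x k)) := by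
    intro l
    rcases hza l with h0 | h0 <;> simp [dotProduct_add, dotProduct_smul, h0, hg'0]
  calc g k (t + s) = g k (γ k ⬝ᵥ (t • z + s • a)) := by
        simp [dotProduct_add, dotProduct_smul, hz, ha]
    _ = ∑ l, g' l ((γ' l ⬝ᵥ t • z) * (γ' l ⬝ᵥ x k)) +
          ∑ l, g' l ((γ' l ⬝ᵥ s • a) * (γ' l ⬝ᵥ x k)) := by
        rw [key, ← Finset.sum_add_distrib]
        exact Finset.sum_congr rfl fun l _ => hsplit l
    _ = g k t + g k s := by
        rw [← key, ← key]
        simp [dotProduct_smul, hz, ha]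

theorem exists_eqUpToSign (hγ : ∀ k, γ k ⬝ᵥ γ k = 1) (hγ' : ∀ l, γ' l ⬝ᵥ γ' l = 1)
    (hg'c : ∀ l, Continuous (g' l))
    (hg'lin : ∀ l l' : ι', (∃ a : ℝ, ∀ u, g' l u = a * u) →
      (∃ a : ℝ, ∀ u, g' l' u = a * u) → l = l')
    {k : ι} (hgk : ∃ u, g k u ≠ 0) : ∃ l, EqUpToSign (γ k) (γ' l) := by
  by_contra! hk
  have hlin : ∀ l, (∀ j, ¬EqUpToSign (γ' l) (γ j)) → ∃ a, ∀ u, g' l u = a * u := fun l hl =>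
    exists_eq_mul_of_continuous_of_map_add (hg'c l)
      (map_add_of_forall_not_eqUpToSign (fun M hM => (E M hM).symm) hx' hx hg'0 hg0 hγ (hγ' l) hl)
  obtain ⟨w, hkw, hw⟩ :
      ∃ w, γ k ⬝ᵥ w = 1 ∧ ∀ l, (∀ j, ¬EqUpToSign (γ' l) (γ j)) → γ' l ⬝ᵥ w = 0 := by
    by_cases hu : ∃ l₀, ∀ j, ¬EqUpToSign (γ' l₀) (γ j)
    · obtain ⟨l₀, hl₀⟩ := hu
      obtain ⟨w, hkw, hl₀w⟩ := exists_dotProduct_eq_one_of_not_eqUpToSign (hγ k) (hγ' l₀) (hk l₀)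
      exact ⟨w, hkw, fun l hl => hg'lin l l₀ (hlin l hl) (hlin l₀ hl₀) ▸ hl₀w⟩
    · exact ⟨γ k, hγ k, fun l hl => absurd ⟨l, hl⟩ hu⟩
  have hvanish : ∀ l, (γ' l ⬝ᵥ w) * (γ' l ⬝ᵥ x k) = 0 := by
    intro l
    by_cases hl : ∀ j, ¬EqUpToSign (γ' l) (γ j)
    · rw [hw l hl, zero_mul]
    · push Not at hl
      obtain ⟨j, hj⟩ := hl
      have hjk : j ≠ k := by
        rintro rfl
        exact hk l hj.symm
      obtain ⟨ε, -, hlj⟩ := hj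
      rw [hlj, smul_dotProduct, smul_dotProduct, hx, if_neg hjk, smul_zero, mul_zero]
  obtain ⟨u, hu⟩ := hgk
  apply hu
  simpa [dotProduct_smul, hkw, mul_assoc, hvanish, hg'0] using
    apply_dotProduct_eq_sum E hx hg0 k (u • w)

end Identifiability

theorem identifiability_sym_general
    {p K K' : ℕ}
    (μ μ' : ℝ)
    (g : Fin K → ℝ → ℝ) (g' : Fin K' → ℝ → ℝ)
    (γ : Fin K → Fin p → ℝ) (γ' : Fin K' → Fin p → ℝ)
    -- Condition 1 for (g, γ)
    (hgc : ∀ k, Continuous (g k))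
    (hγu : ∀ k, ∑ i, γ k i ^ 2 = 1)
    (hg0 : ∀ k, g k 0 = 0)
    (hgnz : ∀ k, ∃ u, g k u ≠ 0)
    (hglin : ∀ k k' : Fin K, (∃ a : ℝ, ∀ u, g k u = a * u) →
      (∃ a : ℝ, ∀ u, g k' u = a * u) → k = k')
    (hΓ : (Matrix.of fun (i : Fin p) (k : Fin K) => γ k i).rank = K)
    -- Condition 1 for (g', γ')
    (hg'c : ∀ l, Continuous (g' l))
    (hγ'u : ∀ l, ∑ i, γ' l i ^ 2 = 1)
    (hg'0 : ∀ l, g' l 0 = 0)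
    (hg'nz : ∀ l, ∃ u, g' l u ≠ 0)
    (hg'lin : ∀ l l' : Fin K', (∃ a : ℝ, ∀ u, g' l u = a * u) →
      (∃ a : ℝ, ∀ u, g' l' u = a * u) → l = l')
    (hΓ' : (Matrix.of fun (i : Fin p) (l : Fin K') => γ' l i).rank = K')
    -- the two additive index representations agree on all symmetric matrices
    (heq : ∀ M : Matrix (Fin p) (Fin p) ℝ, M.IsSymm →
      μ + ∑ k, g k (γ k ⬝ᵥ M.mulVec (γ k)) = μ' + ∑ l, g' l (γ' l ⬝ᵥ M.mulVec (γ' l))) :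
    μ = μ' ∧ K = K' ∧
      ∃ π : Fin K ≃ Fin K', ∀ j : Fin K, ∃ ε : ℝ, (ε = 1 ∨ ε = -1) ∧
        γ j = ε • γ' (π j) ∧ g j = g' (π j) := by
  have hγ : ∀ k, γ k ⬝ᵥ γ k = 1 := fun k => by simpa [dotProduct, sq] using hγu k
  have hγ' : ∀ l, γ' l ⬝ᵥ γ' l = 1 := fun l => by simpa [dotProduct, sq] using hγ'u l
  obtain ⟨x, hx⟩ := exists_isBiorthogonal_of_rank γ (by rwa [Fintype.card_fin])
  obtain ⟨x', hx'⟩ := exists_isBiorthogonal_of_rank γ' (by rwa [Fintype.card_fin])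
  have hμ : μ = μ' := by simpa [hg0, hg'0] using heq 0 Matrix.isSymm_zero
  have E : ∀ M : Matrix (Fin p) (Fin p) ℝ, M.IsSymm →
      additiveIndex g γ M = additiveIndex g' γ' M := fun M hM =>
    add_left_cancel (hμ ▸ heq M hM)
  obtain ⟨π, hπ⟩ := hx.exists_equiv_eqUpToSign hx'
    (fun k => exists_eqUpToSign E hx hx' hg0 hg'0 hγ hγ' hg'c hg'lin (hgnz k))
    (fun l => exists_eqUpToSign (fun M hM => (E M hM).symm) hx' hx hg'0 hg0 hγ' hγ hgc hglin
      (hg'nz l))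
  refine ⟨hμ, Fin.equiv_iff_eq.mp ⟨π⟩, π, fun j => ?_⟩
  obtain ⟨ε, hε, hj⟩ := hπ j
  exact ⟨ε, hε, hj, eq_of_eqUpToSign E hx hx' hg0 hg'0 (hπ j)⟩

/-- Identifiability of the additive index model with symmetric matrix predictors
(Theorem 1 of the paper). -/
theorem identifiability_sym
    {p K K' : ℕ} (hKpos : 0 < K) (hK'pos : 0 < K') (hKp : K < p) (hK'p : K' < p)
    (μ μ' : ℝ)
    (g : Fin K → ℝ → ℝ) (g' : Fin K' → ℝ → ℝ)
    (γ : Fin K → Fin p → ℝ) (γ' : Fin K' → Fin p → ℝ)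
    -- Condition 1 for (g, γ)
    (hgc : ∀ k, Continuous (g k))
    (hγu : ∀ k, ∑ i, γ k i ^ 2 = 1)
    (hg0 : ∀ k, g k 0 = 0)
    (hgnz : ∀ k, ∃ u, g k u ≠ 0)
    (hglin : ∀ k k' : Fin K, (∃ a : ℝ, ∀ u, g k u = a * u) →
      (∃ a : ℝ, ∀ u, g k' u = a * u) → k = k')
    (hΓ : (Matrix.of fun (i : Fin p) (k : Fin K) => γ k i).rank = K)
    (hΓ2 : (Matrix.of fun (i : Fin p) (k : Fin K) => γ k i ^ 2).rank = K)
    -- Condition 1 for (g', γ')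
    (hg'c : ∀ l, Continuous (g' l))
    (hγ'u : ∀ l, ∑ i, γ' l i ^ 2 = 1)
    (hg'0 : ∀ l, g' l 0 = 0)
    (hg'nz : ∀ l, ∃ u, g' l u ≠ 0)
    (hg'lin : ∀ l l' : Fin K', (∃ a : ℝ, ∀ u, g' l u = a * u) →
      (∃ a : ℝ, ∀ u, g' l' u = a * u) → l = l')
    (hΓ' : (Matrix.of fun (i : Fin p) (l : Fin K') => γ' l i).rank = K')
    (hΓ'2 : (Matrix.of fun (i : Fin p) (l : Fin K') => γ' l i ^ 2).rank = K')
    -- the two additive index representations agree on all symmetric matrices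
    (heq : ∀ M : Matrix (Fin p) (Fin p) ℝ, M.IsSymm →
      μ + ∑ k, g k (γ k ⬝ᵥ M.mulVec (γ k)) = μ' + ∑ l, g' l (γ' l ⬝ᵥ M.mulVec (γ' l))) :
    μ = μ' ∧ K = K' ∧
      ∃ π : Fin K ≃ Fin K', ∀ j : Fin K, ∃ ε : ℝ, (ε = 1 ∨ ε = -1) ∧
        γ j = ε • γ' (π j) ∧ g j = g' (π j) :=
  identifiability_sym_general μ μ' g g' γ γ' hgc hγu hg0 hgnz hglin hΓ hg'c hγ'u hg'0 hg'nz hg'lin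
    hΓ' heq
end

section
/- Let p ≥ r ≥ 1 and let C ∈ ℝ^{p×r} be a matrix with columns c₁,…,c_r such that C has rank r and every column of C has at least two nonzero entries. Let φ₁,…,φ_r : ℝ → ℝ and ξ₁,…,ξ_p : ℝ → ℝ be continuous functions satisfying φ₁(c₁ᵀt) + ⋯ + φ_r(c_rᵀt) = ξ₁(t₁) + ⋯ + ξ_p(t_p) for every t = (t₁,…,t_p) ∈ ℝ^p. Then each φ_i and each ξ_j is a quadratic polynomial, i.e., of the form u ↦ a u² + b u + c for some real constants a, b, c. -/
open Matrix

lemma lin_of_add (f : ℝ → ℝ) (hc : Continuous f) (hadd : ∀ x y, f (x + y) = f x + f y) :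
    ∀ x, f x = f 1 * x := by
  have h0 : f 0 = 0 := by have := hadd 0 0; simpa using this
  let F : ℝ →+ ℝ := { toFun := f, map_zero' := h0, map_add' := hadd }
  intro x
  have : F x = x • F 1 := by
    have := (F.toRealLinearMap hc).map_smul x 1
    simpa [AddMonoidHom.coe_toRealLinearMap] using this
  simpa [F, mul_comm] using this

lemma quad_of_dd (f : ℝ → ℝ) (hc : Continuous f)
    (h : ∀ x a b : ℝ, f (x + a + b) - f (x + a) - f (x + b) + f x
        = f (a + b) - f a - f b + f 0) :
    ∃ A B c : ℝ, ∀ u : ℝ, f u = A * u ^ 2 + B * u + c := by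
  set m : ℝ → ℝ := fun a => f (1 + a) - f 1 - f a + f 0 with hm
  have step : ∀ a x, f (x + a) - f x = m a * x + (f a - f 0) := by
    intro a
    have hadd : ∀ x y, (fun x => f (x + a) - f x - (f a - f 0)) (x + y)
        = (fun x => f (x + a) - f x - (f a - f 0)) x
          + (fun x => f (x + a) - f x - (f a - f 0)) y := by
      intro x y
      have h3 := h x y a
      simp only
      linarith
    have hcont : Continuous fun x => f (x + a) - f x - (f a - f 0) :=
      ((hc.comp (continuous_id.add continuous_const)).sub hc).sub continuous_const
    have hlin := lin_of_add _ hcont hadd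
    intro x
    have hx := hlin x
    have hma : f (1 + a) - f 1 - (f a - f 0) = m a := by rw [hm]; ring
    rw [hma] at hx
    linarith
  have msym : ∀ a x : ℝ, m a * x = m x * a := by
    intro a x
    have h1 := step a x
    have h2 := step x a
    have h3 : f (x + a) = f (a + x) := by rw [add_comm]
    linarith
  have mlin : ∀ a, m a = m 1 * a := by
    intro a; have := msym a 1; simpa using this
  have Fadd : ∀ x y, (fun u => f u - f 0 - m 1 / 2 * u ^ 2) (x + y)
      = (fun u => f u - f 0 - m 1 / 2 * u ^ 2) x
        + (fun u => f u - f 0 - m 1 / 2 * u ^ 2) y := by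
    intro x y
    have h1 := step y x
    rw [mlin y] at h1
    simp only
    linear_combination h1
  have Fcont : Continuous fun u => f u - f 0 - m 1 / 2 * u ^ 2 :=
    (hc.sub continuous_const).sub (continuous_const.mul (continuous_pow 2))
  have hlin := lin_of_add _ Fcont Fadd
  refine ⟨m 1 / 2, f 1 - f 0 - m 1 / 2 * 1 ^ 2, f 0, fun u => ?_⟩
  have hu := hlin u
  linear_combination hu

lemma surj_of_rank {p r : ℕ} (C : Matrix (Fin p) (Fin r) ℝ) (hrank : C.rank = r) :
    ∀ x : Fin r → ℝ, ∃ t : Fin p → ℝ, ∀ i, (fun j => C j i) ⬝ᵥ t = x i := by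
  have hT : (Cᵀ).rank = r := by rw [Matrix.rank_transpose]; exact hrank
  have htop : LinearMap.range (Cᵀ).mulVecLin = ⊤ := by
    apply Submodule.eq_top_of_finrank_eq
    rw [← Matrix.rank, hT, Module.finrank_fin_fun]
  intro x
  obtain ⟨t, ht⟩ := LinearMap.range_eq_top.mp htop x
  refine ⟨t, fun i => ?_⟩
  have : (Cᵀ).mulVec t i = x i := by rw [show (Cᵀ).mulVec t = (Cᵀ).mulVecLin t from rfl, ht]
  simpa [Matrix.mulVec, Matrix.transpose_apply] using this

lemma const_of_sum_zero {r : ℕ} (g : Fin r → ℝ → ℝ)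
    (hg : ∀ x : Fin r → ℝ, ∑ i, g i (x i) = 0) :
    ∀ (i : Fin r) (x : ℝ), g i x = g i 0 := by
  intro i x
  have h1 := hg (Pi.single i x)
  have h2 := hg (Pi.single i (0:ℝ))
  rw [Fintype.sum_eq_add_sum_compl i] at h1 h2
  simp only [Pi.single_eq_same] at h1 h2
  have h3 : ∀ k ∈ ({i}ᶜ : Finset (Fin r)),
      g k ((Pi.single i x : Fin r → ℝ) k) = g k ((Pi.single i (0:ℝ) : Fin r → ℝ) k) := by
    intro k hk
    have : k ≠ i := by simpa using hk
    rw [Pi.single_eq_of_ne this, Pi.single_eq_of_ne this]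
  rw [Finset.sum_congr rfl h3] at h1
  linarith

/-- Khatri–Rao functional-equation lemma (Lemma 1 of the paper): if a sum of ridge
functions of linear projections equals a coordinatewise additive function for all
arguments, then all functions involved are quadratic polynomials. -/
theorem khatri_functional_equation
    {p r : ℕ} (hr : 1 ≤ r) (hpr : r ≤ p)
    (C : Matrix (Fin p) (Fin r) ℝ)
    (hrank : C.rank = r)
    (hcols : ∀ i : Fin r, ∃ j j' : Fin p, j ≠ j' ∧ C j i ≠ 0 ∧ C j' i ≠ 0)
    (φ : Fin r → ℝ → ℝ) (ξ : Fin p → ℝ → ℝ)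
    (hφc : ∀ i, Continuous (φ i)) (hξc : ∀ j, Continuous (ξ j))
    (heq : ∀ t : Fin p → ℝ, ∑ i, φ i ((fun j => C j i) ⬝ᵥ t) = ∑ j, ξ j (t j)) :
    (∀ i : Fin r, ∃ a b c : ℝ, ∀ u : ℝ, φ i u = a * u ^ 2 + b * u + c) ∧
    (∀ j : Fin p, ∃ a b c : ℝ, ∀ u : ℝ, ξ j u = a * u ^ 2 + b * u + c) := by
  have part1 : ∀ i : Fin r, ∃ a b c : ℝ, ∀ u : ℝ, φ i u = a * u ^ 2 + b * u + c := by
    intro i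
    obtain ⟨j, j', hjj', hj, hj'⟩ := hcols i
    -- key double-difference identity
    have key : ∀ (h h' : ℝ) (x : Fin r → ℝ),
        ∑ k, (φ k (x k + (C j k * h + C j' k * h')) - φ k (x k + C j k * h)
          - φ k (x k + C j' k * h') + φ k (x k)) = 0 := by
      intro h h' x
      obtain ⟨t, ht⟩ := surj_of_rank C hrank x
      set d : Fin p → ℝ := fun l => if l = j then h else 0 with hd
      set d' : Fin p → ℝ := fun l => if l = j' then h' else 0 with hd'
      have hdot : ∀ (k : Fin r) (v : Fin p → ℝ),
          (fun l => C l k) ⬝ᵥ (fun l => t l + v l)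
            = x k + (fun l => C l k) ⬝ᵥ v := by
        intro k v
        rw [← ht k]
        simp [dotProduct, mul_add, Finset.sum_add_distrib]
      have hdd : ∀ k : Fin r, (fun l => C l k) ⬝ᵥ d = C j k * h := by
        intro k
        simp [hd, dotProduct, mul_ite]
      have hdd' : ∀ k : Fin r, (fun l => C l k) ⬝ᵥ d' = C j' k * h' := by
        intro k
        simp [hd', dotProduct, mul_ite]
      have hdsum : ∀ k : Fin r, (fun l => C l k) ⬝ᵥ (fun l => d l + d' l)
          = C j k * h + C j' k * h' := by
        intro k
        have : (fun l => C l k) ⬝ᵥ (fun l => d l + d' l)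
            = (fun l => C l k) ⬝ᵥ d + (fun l => C l k) ⬝ᵥ d' := by
          simp [dotProduct, mul_add, Finset.sum_add_distrib]
        rw [this, hdd, hdd']
      have E3 := heq (fun l => t l + (d l + d' l))
      have E1 := heq (fun l => t l + d l)
      have E2 := heq (fun l => t l + d' l)
      have E0 := heq t
      rw [Finset.sum_congr rfl (fun k _ => by rw [hdot k (fun l => d l + d' l), hdsum k])] at E3
      rw [Finset.sum_congr rfl (fun k _ => by rw [hdot k d, hdd k])] at E1
      rw [Finset.sum_congr rfl (fun k _ => by rw [hdot k d', hdd' k])] at E2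
      rw [Finset.sum_congr rfl (fun k _ => by rw [ht k])] at E0
      have hterm : ∀ l : Fin p,
          ξ l (t l + (d l + d' l)) - ξ l (t l + d l) - ξ l (t l + d' l) + ξ l (t l) = 0 := by
        intro l
        rcases eq_or_ne l j with rfl | hlj
        · have : l ≠ j' := hjj'
          simp [hd, hd', this]
        · rcases eq_or_ne l j' with rfl | hlj'
          · simp [hd, hd', hlj]
          · simp [hd, hd', hlj, hlj']
      have hsum : ∑ l, (ξ l (t l + (d l + d' l)) - ξ l (t l + d l)
          - ξ l (t l + d' l) + ξ l (t l)) = 0 :=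
        Finset.sum_eq_zero fun l _ => hterm l
      simp only [Finset.sum_add_distrib, Finset.sum_sub_distrib] at hsum ⊢
      linarith
    -- double difference of φ i is independent of base point
    have hdd : ∀ a b : ℝ, ∀ y : ℝ,
        φ i (y + a + b) - φ i (y + a) - φ i (y + b) + φ i y
          = φ i (a + b) - φ i a - φ i b + φ i 0 := by
      intro a b y
      set h : ℝ := a / C j i with hhd
      set h' : ℝ := b / C j' i with hhd'
      have ha : C j i * h = a := by rw [hhd]; field_simp
      have hb : C j' i * h' = b := by rw [hhd']; field_simp
      have hconst := const_of_sum_zero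
        (fun k y => φ k (y + (C j k * h + C j' k * h')) - φ k (y + C j k * h)
          - φ k (y + C j' k * h') + φ k y) (key h h') i y
      simp only [ha, hb] at hconst
      rw [show y + (a + b) = y + a + b by ring] at hconst
      simpa using hconst
    obtain ⟨A, B, c, hq⟩ := quad_of_dd (φ i) (hφc i) (fun y a b => hdd a b y)
    exact ⟨A, B, c, hq⟩
  refine ⟨part1, ?_⟩
  choose a b c hq using part1
  intro j
  set K : ℝ := ∑ l ∈ ({j}ᶜ : Finset (Fin p)), ξ l 0 with hK
  have hEx : ∀ u : ℝ, ξ j u = ∑ k, φ k (C j k * u) - K := by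
    intro u
    have E := heq (Pi.single j u)
    rw [Finset.sum_congr rfl (fun k _ => by rw [dotProduct_single])] at E
    rw [Fintype.sum_eq_add_sum_compl j] at E
    simp only [Pi.single_eq_same] at E
    have h3 : ∀ l ∈ ({j}ᶜ : Finset (Fin p)),
        ξ l ((Pi.single j u : Fin p → ℝ) l) = ξ l 0 := by
      intro l hl
      have : l ≠ j := by simpa using hl
      rw [Pi.single_eq_of_ne this]
    rw [Finset.sum_congr rfl h3] at E
    rw [hK]
    linarith
  refine ⟨∑ k, a k * C j k ^ 2, ∑ k, b k * C j k, (∑ k, c k) - K, fun u => ?_⟩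
  rw [hEx u]
  rw [Finset.sum_congr rfl (fun k _ => hq k (C j k * u))]
  rw [Finset.sum_congr rfl (fun k _ =>
    show a k * (C j k * u) ^ 2 + b k * (C j k * u) + c k
        = a k * C j k ^ 2 * u ^ 2 + b k * C j k * u + c k by ring)]
  rw [Finset.sum_add_distrib, Finset.sum_add_distrib, ← Finset.sum_mul, ← Finset.sum_mul]
  ring
end

section
/- Let p ≥ 1 and 1 ≤ K ≤ p. Let g₁,…,g_K : ℝ → ℝ be continuous functions with g_k(0) = 0 and g_k not identically zero for each k, and such that at most one of the g_k is a linear function (of the form u ↦ a·u). Let g̃ : ℝ → ℝ be continuous with g̃(0) = 0 and g̃ not identically zero, and let q = (q₁,…,q_p) ∈ ℝ^p satisfy ‖q‖₂ = 1. If for every z = (z₁,…,z_p) ∈ ℝ^p one has g₁(z₁) + ⋯ + g_K(z_K) = g̃(q₁² z₁ + ⋯ + q_p² z_p), then K = 1, g₁ = g̃, q₁ ∈ {−1, 1}, and q_j = 0 for all j ≥ 2. -/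
open Matrix

/-- Base case of the induction in the identifiability proof: a sum of ridge functions
of the first `K` coordinates that equals a single ridge function of a weighted sum of
all coordinates (with weights `q j ^ 2`, `‖q‖₂ = 1`) forces `K = 1`, `g₁ = g̃`, and
`q` to be a signed first standard basis vector. -/
theorem single_index_base_case
    {p K : ℕ} (hp : 1 ≤ p) (hK : 1 ≤ K) (hKp : K ≤ p)
    (g : Fin K → ℝ → ℝ) (g' : ℝ → ℝ) (q : Fin p → ℝ)
    (hgc : ∀ k, Continuous (g k)) (hg0 : ∀ k, g k 0 = 0)
    (hgnz : ∀ k, ∃ u, g k u ≠ 0)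
    (hglin : ∀ k k' : Fin K, (∃ a : ℝ, ∀ u, g k u = a * u) →
      (∃ a : ℝ, ∀ u, g k' u = a * u) → k = k')
    (hg'c : Continuous g') (hg'0 : g' 0 = 0) (hg'nz : ∃ u, g' u ≠ 0)
    (hq : ∑ i, q i ^ 2 = 1)
    (heq : ∀ z : Fin p → ℝ,
      ∑ k, g k (z (Fin.castLE hKp k)) = g' (∑ i, q i ^ 2 * z i)) :
    K = 1 ∧ (∀ k : Fin K, g k = g') ∧
    (∀ j : Fin p, (j : ℕ) = 0 → (q j = 1 ∨ q j = -1)) ∧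
    (∀ j : Fin p, (j : ℕ) ≠ 0 → q j = 0) := by
  set c : Fin p → ℝ := fun i => q i ^ 2 with hcdef
  have hcast_inj : Function.Injective (Fin.castLE hKp) := Fin.castLE_injective hKp
  -- single-coordinate specialization
  have hsingle : ∀ (j : Fin p) (t : ℝ),
      (∑ k, g k (if Fin.castLE hKp k = j then t else 0)) = g' (c j * t) := by
    intro j t
    have h := heq (fun i => if i = j then t else 0)
    simpa [mul_ite, Finset.sum_ite_eq'] using h
  -- for k < K : g k t = g' (c (castLE k) * t)
  have hgk : ∀ (k : Fin K) (t : ℝ), g k t = g' (c (Fin.castLE hKp k) * t) := by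
    intro k t
    have h := hsingle (Fin.castLE hKp k) t
    rw [Finset.sum_eq_single k] at h
    · simpa using h
    · intro k' _ hk'
      rw [if_neg (fun hc => hk' (hcast_inj hc)), hg0]
    · simp
  -- c (castLE k) ≠ 0
  have hck : ∀ k : Fin K, c (Fin.castLE hKp k) ≠ 0 := by
    intro k hc0
    obtain ⟨u, hu⟩ := hgnz k
    exact hu (by rw [hgk k u, hc0, zero_mul, hg'0])
  -- for j with K ≤ j : c j = 0
  have hcj : ∀ j : Fin p, K ≤ (j : ℕ) → c j = 0 := by
    intro j hj
    by_contra hc0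
    obtain ⟨u, hu⟩ := hg'nz
    have h := hsingle j (u / c j)
    rw [Finset.sum_eq_zero] at h
    · rw [mul_div_cancel₀ _ hc0] at h
      exact hu h.symm
    · intro k _
      have : Fin.castLE hKp k ≠ j := by
        intro hc
        have : (k : ℕ) = (j : ℕ) := by rw [← hc]; rfl
        omega
      rw [if_neg this, hg0]
  -- K = 1
  have hK1 : K = 1 := by
    by_contra hne
    have hK2 : 2 ≤ K := by omega
    set k0 : Fin K := ⟨0, by omega⟩
    set k1 : Fin K := ⟨1, by omega⟩
    have hk01 : k0 ≠ k1 := by simp [k0, k1, Fin.ext_iff]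
    set j0 := Fin.castLE hKp k0
    set j1 := Fin.castLE hKp k1
    have hj01 : j0 ≠ j1 := fun h => hk01 (hcast_inj h)
    -- two-coordinate specialization
    have hpair : ∀ s t : ℝ, g k0 s + g k1 t = g' (c j0 * s + c j1 * t) := by
      intro s t
      have h := heq (fun i => if i = j0 then s else if i = j1 then t else 0)
      have hL : (∑ k, g k (if Fin.castLE hKp k = j0 then s
            else if Fin.castLE hKp k = j1 then t else 0)) = g k0 s + g k1 t := by
        have : ∀ k : Fin K, g k (if Fin.castLE hKp k = j0 then s
              else if Fin.castLE hKp k = j1 then t else 0)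
            = (if k = k0 then g k0 s else 0) + (if k = k1 then g k1 t else 0) := by
          intro k
          rcases eq_or_ne k k0 with rfl | h0
          · rw [if_pos rfl, if_pos rfl, if_neg hk01, add_zero]
          · rcases eq_or_ne k k1 with rfl | h1
            · rw [if_neg (fun h => h0 (hcast_inj h)), if_pos rfl,
                if_neg h0, if_pos rfl, zero_add]
            · rw [if_neg (fun h => h0 (hcast_inj h)),
                if_neg (fun h => h1 (hcast_inj h)), hg0,
                if_neg h0, if_neg h1, add_zero]
        rw [Finset.sum_congr rfl (fun k _ => this k), Finset.sum_add_distrib]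
        simp
      have hR : (∑ i, c i * (if i = j0 then s else if i = j1 then t else 0))
          = c j0 * s + c j1 * t := by
        have : ∀ i : Fin p, c i * (if i = j0 then s else if i = j1 then t else 0)
            = (if i = j0 then c j0 * s else 0) + (if i = j1 then c j1 * t else 0) := by
          intro i
          rcases eq_or_ne i j0 with rfl | h0
          · simp [if_neg (Ne.symm hj01), hj01]
          · rcases eq_or_ne i j1 with rfl | h1
            · simp [h0]
            · simp [h0, h1]
        rw [Finset.sum_congr rfl (fun i _ => this i), Finset.sum_add_distrib]
        simp
      rw [hL] at h
      rw [hR] at h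
      exact h
    -- g' is additive
    have hadd : ∀ x y : ℝ, g' (x + y) = g' x + g' y := by
      intro x y
      have h := hpair (x / c j0) (y / c j1)
      rw [hgk k0, hgk k1, mul_div_cancel₀ _ (hck k0), mul_div_cancel₀ _ (hck k1)] at h
      exact h.symm
    -- hence linear
    have hlin : ∀ u : ℝ, g' u = g' 1 * u := by
      set F : ℝ →+ ℝ := AddMonoidHom.mk' g' (fun x y => hadd x y)
      have hF : Continuous F := hg'c
      intro u
      have := (F.toRealLinearMap hF).map_smul u (1 : ℝ)
      simpa [F, mul_comm] using this
    have hlink : ∀ k : Fin K, ∃ a : ℝ, ∀ u, g k u = a * u := by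
      intro k
      refine ⟨g' 1 * c (Fin.castLE hKp k), fun u => ?_⟩
      rw [hgk k u, hlin]; ring
    exact hk01 (hglin k0 k1 (hlink k0) (hlink k1))
  subst hK1
  set k0 : Fin 1 := 0
  set j0 := Fin.castLE hKp k0
  have hj0 : (j0 : ℕ) = 0 := rfl
  have hc0 : c j0 = 1 := by
    rw [← hq, Finset.sum_eq_single j0]
    · intro i _ hi
      refine hcj i ?_
      have : (i : ℕ) ≠ (j0 : ℕ) := fun h => hi (Fin.ext h)
      omega
    · simp
  refine ⟨rfl, ?_, ?_, ?_⟩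
  · intro k
    funext u
    have hkk : k = k0 := Subsingleton.elim _ _
    rw [hkk, hgk k0 u, hc0, one_mul]
  · intro j hj
    have : j = j0 := Fin.ext (by omega)
    rw [this]
    have : q j0 * q j0 = 1 := by rw [← sq]; exact hc0
    exact mul_self_eq_one_iff.mp this
  · intro j hj
    have : c j = 0 := hcj j (by omega)
    exact pow_eq_zero_iff (n := 2) (by norm_num) |>.mp this
end

section
/- Let p, K, K̃ be positive integers with K < p and K̃ < p, and let μ, μ̃ ∈ ℝ. Let a_k, b_k (k = 1,…,K) and c_l, d_l (l = 1,…,K̃) be real numbers with (a_k, b_k) ≠ (0,0) for each k, (c_l, d_l) ≠ (0,0) for each l, at most one index k with a_k = 0, and at most one index l with c_l = 0. Let γ₁,…,γ_K and γ̃₁,…,γ̃_{K̃} be unit vectors in ℝ^p such that the p×K matrix Γ with columns γ_k and its entrywise square Γ⊙Γ both have rank K, and likewise the p×K̃ matrix Γ̃ with columns γ̃_l and Γ̃⊙Γ̃ both have rank K̃. If for every symmetric matrix M ∈ ℝ^{p×p}, μ + Σ_{k=1}^{K} (a_k (γ_kᵀMγ_k)² + b_k (γ_kᵀMγ_k)) =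 μ̃ + Σ_{l=1}^{K̃} (c_l (γ̃_lᵀMγ̃_l)² + d_l (γ̃_lᵀMγ̃_l)), then μ = μ̃, K = K̃, and there exist a permutation π of {1,…,K} and signs ε_j ∈ {−1, 1} such that γ_j = ε_j γ̃_{π(j)}, a_j = c_{π(j)}, and b_j = d_{π(j)} for every j. -/
open Matrix

section AuxiliaryLemmas

lemma dot_self_one {p : ℕ} {v : Fin p → ℝ} (h : ∑ i, v i ^ 2 = 1) : v ⬝ᵥ v = 1 := by
  rw [dotProduct, ← h]
  exact Finset.sum_congr rfl fun i _ => (pow_two _).symm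

lemma exists_dual {p n : ℕ} (γ : Fin n → Fin p → ℝ)
    (h : (Matrix.of fun (i : Fin p) (k : Fin n) => γ k i).rank = n) :
    ∃ u : Fin n → Fin p → ℝ, ∀ j k, γ k ⬝ᵥ u j = if k = j then 1 else 0 := by
  set A : Matrix (Fin n) (Fin p) ℝ := Matrix.of fun k i => γ k i with hA
  have hArank : A.rank = n := by
    have hT : Aᵀ = Matrix.of fun (i : Fin p) (k : Fin n) => γ k i := by
      ext i k; rfl
    rw [← Matrix.rank_transpose, hT, h]
  have hsurj : Function.Surjective A.mulVecLin := by
    rw [← LinearMap.range_eq_top]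
    apply Submodule.eq_top_of_finrank_eq
    rw [show Module.finrank ℝ ↥(LinearMap.range A.mulVecLin) = A.rank from rfl]
    rw [hArank, Module.finrank_fintype_fun_eq_card, Fintype.card_fin]
  choose u hu using fun j => hsurj (Pi.single j 1)
  refine ⟨u, fun j k => ?_⟩
  have := congrFun (hu j) k
  simpa [Matrix.mulVecLin_apply, Matrix.mulVec, dotProduct, hA, Pi.single_apply] using this

lemma vec_eq_of_dot {p : ℕ} {m n : Fin p → ℝ} {e f : ℝ}
    (hm : ∑ i, m i ^ 2 = 1) (hn : ∑ i, n i ^ 2 = 1) (he : e ≠ 0)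
    (h : ∀ w, e * (m ⬝ᵥ w) = f * (n ⬝ᵥ w)) :
    ∃ r : ℝ, (r = 1 ∨ r = -1) ∧ m = r • n := by
  have hveq : m = (f / e) • n := by
    funext i
    have hi := h (Pi.single i 1)
    rw [dotProduct_single, dotProduct_single] at hi
    simp only [Pi.smul_apply, smul_eq_mul]
    field_simp
    linarith
  have hr2 : (f / e) * (f / e) = 1 := by
    have hsum : ∑ i, m i ^ 2 = (f / e) * (f / e) * ∑ i, n i ^ 2 := by
      rw [Finset.mul_sum]
      refine Finset.sum_congr rfl fun i _ => ?_
      rw [hveq]; simp only [Pi.smul_apply, smul_eq_mul]; ring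
    rw [hm, hn, mul_one] at hsum
    linarith
  exact ⟨f / e, mul_self_eq_one_iff.mp hr2, hveq⟩

lemma bilin_of_quad {p n : ℕ} {γ : Fin n → Fin p → ℝ} {m : Fin p → ℝ} {e : ℝ} {α : Fin n → ℝ}
    (h : ∀ w, e * (m ⬝ᵥ w) ^ 2 = ∑ k, α k * (γ k ⬝ᵥ w) ^ 2) :
    ∀ w w', e * ((m ⬝ᵥ w) * (m ⬝ᵥ w')) = ∑ k, α k * ((γ k ⬝ᵥ w) * (γ k ⬝ᵥ w')) := by
  intro w w'
  have h1 := h (w + w')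
  have h2 := h w
  have h3 := h w'
  simp only [dotProduct_add] at h1
  have hs : ∑ k, α k * (γ k ⬝ᵥ w + γ k ⬝ᵥ w') ^ 2
      = ∑ k, α k * (γ k ⬝ᵥ w) ^ 2 + ∑ k, α k * (γ k ⬝ᵥ w') ^ 2
        + 2 * ∑ k, α k * ((γ k ⬝ᵥ w) * (γ k ⬝ᵥ w')) := by
    rw [Finset.mul_sum, ← Finset.sum_add_distrib, ← Finset.sum_add_distrib]
    exact Finset.sum_congr rfl fun k _ => by ring
  linarith [h1, h2, h3, hs]

lemma rank_one_in_span {p n : ℕ} {γ : Fin n → Fin p → ℝ} {u : Fin n → Fin p → ℝ}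
    (hdual : ∀ j k : Fin n, γ k ⬝ᵥ u j = if k = j then 1 else 0)
    (hγn : ∀ k, ∑ i, γ k i ^ 2 = 1)
    {m : Fin p → ℝ} (hm : ∑ i, m i ^ 2 = 1)
    {e : ℝ} (he : e ≠ 0) (α : Fin n → ℝ)
    (h : ∀ w w', e * ((m ⬝ᵥ w) * (m ⬝ᵥ w')) = ∑ k, α k * ((γ k ⬝ᵥ w) * (γ k ⬝ᵥ w'))) :
    ∃ j, ∃ r : ℝ, (r = 1 ∨ r = -1) ∧ m = r • γ j ∧ α j ≠ 0 := by
  have hcol : ∀ j w, e * ((m ⬝ᵥ u j) * (m ⬝ᵥ w)) = α j * (γ j ⬝ᵥ w) := by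
    intro j w
    rw [h (u j) w]
    rw [Finset.sum_eq_single j (fun k _ hk => by rw [hdual]; simp [hk])
      (fun hj => absurd (Finset.mem_univ j) hj)]
    rw [hdual]; simp
  have hex : ∃ j, m ⬝ᵥ u j ≠ 0 := by
    by_contra hall
    push_neg at hall
    have hα : ∀ j, α j = 0 := by
      intro j
      have hj := hcol j (γ j)
      rw [hall j, dot_self_one (hγn j)] at hj
      simpa using hj.symm
    have hmm := h m m
    rw [dot_self_one hm] at hmm
    simp only [hα, zero_mul, Finset.sum_const_zero, mul_one] at hmm
    exact he hmm
  obtain ⟨j, hj⟩ := hex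
  obtain ⟨r, hr, hmr⟩ := vec_eq_of_dot hm (hγn j) (mul_ne_zero he hj)
    (fun w => by rw [mul_assoc]; exact hcol j w)
  refine ⟨j, r, hr, hmr, fun hαj => ?_⟩
  have hc := hcol j m
  rw [hαj, zero_mul, dot_self_one hm, mul_one] at hc
  exact mul_ne_zero he hj hc

lemma match_nonzero {p n n' : ℕ} {γ : Fin n → Fin p → ℝ} {γ' : Fin n' → Fin p → ℝ}
    {u : Fin n → Fin p → ℝ} {u' : Fin n' → Fin p → ℝ}
    (hd : ∀ j k, γ k ⬝ᵥ u j = if k = j then 1 else 0)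
    (hd' : ∀ j k, γ' k ⬝ᵥ u' j = if k = j then 1 else 0)
    (hγn : ∀ k, ∑ i, γ k i ^ 2 = 1) (hγ'n : ∀ l, ∑ i, γ' l i ^ 2 = 1)
    (a : Fin n → ℝ) (c : Fin n' → ℝ)
    (hP : ∀ v w, ∑ k, a k * ((γ k ⬝ᵥ v) * (γ k ⬝ᵥ w)) ^ 2
        = ∑ l, c l * ((γ' l ⬝ᵥ v) * (γ' l ⬝ᵥ w)) ^ 2) :
    ∀ l, c l ≠ 0 → ∃ k, ∃ r : ℝ, (r = 1 ∨ r = -1) ∧ γ' l = r • γ k ∧ a k ≠ 0 := by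
  intro l hcl
  have hq : ∀ w, c l * (γ' l ⬝ᵥ w) ^ 2 = ∑ k, (a k * (γ k ⬝ᵥ u' l) ^ 2) * (γ k ⬝ᵥ w) ^ 2 := by
    intro w
    have h := hP (u' l) w
    rw [Finset.sum_eq_single l (fun l' _ hl' => by rw [hd']; simp [hl'])
      (fun hl => absurd (Finset.mem_univ l) hl)] at h
    rw [hd'] at h
    simp only [eq_self_iff_true, if_true, one_mul] at h
    rw [← h]
    exact Finset.sum_congr rfl fun k _ => by ring
  have hb := bilin_of_quad hq
  obtain ⟨j, rr, hrr, hmr, hαj⟩ := rank_one_in_span hd hγn (hγ'n l) hcl _ hb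
  exact ⟨j, rr, hrr, hmr, fun h0 => hαj (by rw [h0, zero_mul])⟩

lemma match_zero {p n n' : ℕ} {γ : Fin n → Fin p → ℝ} {γ' : Fin n' → Fin p → ℝ}
    {u' : Fin n' → Fin p → ℝ}
    (hd' : ∀ j k, γ' k ⬝ᵥ u' j = if k = j then 1 else 0)
    (hγn : ∀ k, ∑ i, γ k i ^ 2 = 1) (hγ'n : ∀ l, ∑ i, γ' l i ^ 2 = 1)
    (a b : Fin n → ℝ) (c d : Fin n' → ℝ)
    (hcd : ∀ l, ¬(c l = 0 ∧ d l = 0))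
    (ha0 : ∀ k k' : Fin n, a k = 0 → a k' = 0 → k = k')
    (hs1 : ∀ k, a k ≠ 0 → ∃ l, ∃ r : ℝ, (r = 1 ∨ r = -1) ∧ γ k = r • γ' l ∧ c l ≠ 0)
    (hL : ∀ v w, ∑ k, b k * ((γ k ⬝ᵥ v) * (γ k ⬝ᵥ w))
        = ∑ l, d l * ((γ' l ⬝ᵥ v) * (γ' l ⬝ᵥ w))) :
    ∀ l, c l = 0 → ∃ k, ∃ r : ℝ, (r = 1 ∨ r = -1) ∧ γ' l = r • γ k ∧ a k = 0 := by
  intro l hcl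
  have hdl : d l ≠ 0 := fun h => hcd l ⟨hcl, h⟩
  have hcol : ∀ w, d l * (γ' l ⬝ᵥ w) = ∑ k, (b k * (γ k ⬝ᵥ u' l)) * (γ k ⬝ᵥ w) := by
    intro w
    have h := hL (u' l) w
    rw [Finset.sum_eq_single l (fun l' _ hl' => by rw [hd']; simp [hl'])
      (fun hl => absurd (Finset.mem_univ l) hl)] at h
    rw [hd'] at h
    simp only [eq_self_iff_true, if_true, one_mul] at h
    rw [← h]
    exact Finset.sum_congr rfl fun k _ => by ring
  have hz : ∀ k, a k ≠ 0 → γ k ⬝ᵥ u' l = 0 := by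
    intro k hak
    obtain ⟨l', rr, hrr, hkr, hcl'⟩ := hs1 k hak
    rw [hkr, smul_dotProduct, hd']
    have hne : l' ≠ l := fun h => hcl' (h ▸ hcl)
    simp [hne]
  by_cases hk0 : ∃ k0, a k0 = 0
  · obtain ⟨k0, hk0⟩ := hk0
    have hone : ∀ w, d l * (γ' l ⬝ᵥ w) = (b k0 * (γ k0 ⬝ᵥ u' l)) * (γ k0 ⬝ᵥ w) := by
      intro w
      rw [hcol w]
      refine Finset.sum_eq_single k0 (fun k _ hkk => ?_) (fun h => absurd (Finset.mem_univ k0) h)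
      rw [hz k (fun h => hkk (ha0 k k0 h hk0))]
      ring
    obtain ⟨rr, hrr, hmr⟩ := vec_eq_of_dot (hγ'n l) (hγn k0) hdl hone
    exact ⟨k0, rr, hrr, hmr, hk0⟩
  · push_neg at hk0
    exfalso
    have h := hcol (γ' l)
    rw [Finset.sum_eq_zero (fun k _ => by rw [hz k (hk0 k)]; ring),
      dot_self_one (hγ'n l), mul_one] at h
    exact hdl h

lemma sum_expand {n : ℕ} (α β X : Fin n → ℝ) :
    ∑ k, (α k * (2 * X k) ^ 2 + β k * (2 * X k))
      = 4 * ∑ k, α k * X k ^ 2 + 2 * ∑ k, β k * X k := by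
  rw [Finset.mul_sum, Finset.mul_sum, ← Finset.sum_add_distrib]
  exact Finset.sum_congr rfl fun k _ => by ring

end AuxiliaryLemmas

/-- Part (2) of the identifiability proof: identifiability of the additive index model
when every ridge function is a quadratic polynomial without constant term,
`g k u = a k * u ^ 2 + b k * u`. -/
theorem identifiability_quadratic_case
    {p K K' : ℕ} (hKpos : 0 < K) (hK'pos : 0 < K') (hKp : K < p) (hK'p : K' < p)
    (μ μ' : ℝ)
    (a b : Fin K → ℝ) (c d : Fin K' → ℝ)
    (γ : Fin K → Fin p → ℝ) (γ' : Fin K' → Fin p → ℝ)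
    (hab : ∀ k, ¬(a k = 0 ∧ b k = 0))
    (hcd : ∀ l, ¬(c l = 0 ∧ d l = 0))
    (ha0 : ∀ k k' : Fin K, a k = 0 → a k' = 0 → k = k')
    (hc0 : ∀ l l' : Fin K', c l = 0 → c l' = 0 → l = l')
    (hγu : ∀ k, ∑ i, γ k i ^ 2 = 1) (hγ'u : ∀ l, ∑ i, γ' l i ^ 2 = 1)
    (hΓ : (Matrix.of fun (i : Fin p) (k : Fin K) => γ k i).rank = K)
    (hΓ2 : (Matrix.of fun (i : Fin p) (k : Fin K) => γ k i ^ 2).rank = K)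
    (hΓ' : (Matrix.of fun (i : Fin p) (l : Fin K') => γ' l i).rank = K')
    (hΓ'2 : (Matrix.of fun (i : Fin p) (l : Fin K') => γ' l i ^ 2).rank = K')
    (heq : ∀ M : Matrix (Fin p) (Fin p) ℝ, M.IsSymm →
      μ + ∑ k, (a k * (γ k ⬝ᵥ M.mulVec (γ k)) ^ 2 + b k * (γ k ⬝ᵥ M.mulVec (γ k))) =
      μ' + ∑ l, (c l * (γ' l ⬝ᵥ M.mulVec (γ' l)) ^ 2 + d l * (γ' l ⬝ᵥ M.mulVec (γ' l)))) :
    μ = μ' ∧ K = K' ∧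
      ∃ π : Fin K ≃ Fin K', ∀ j : Fin K, ∃ ε : ℝ, (ε = 1 ∨ ε = -1) ∧
        γ j = ε • γ' (π j) ∧ a j = c (π j) ∧ b j = d (π j) := by
  obtain ⟨u, hd⟩ := exists_dual γ hΓ
  obtain ⟨u', hd'⟩ := exists_dual γ' hΓ'
  -- μ = μ'
  have hμ : μ = μ' := by
    have h0 := heq 0 (by simp [Matrix.IsSymm])
    simpa using h0
  -- symmetric rank-two matrices
  have hsym : ∀ v w : Fin p → ℝ, (Matrix.of fun i j => v i * w j + w i * v j).IsSymm := by
    intro v w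
    show _ᵀ = _
    ext i j
    simp only [Matrix.transpose_apply, Matrix.of_apply]
    ring
  have hqv : ∀ (x v w : Fin p → ℝ),
      x ⬝ᵥ (Matrix.of fun i j => v i * w j + w i * v j).mulVec x
        = 2 * ((x ⬝ᵥ v) * (x ⬝ᵥ w)) := by
    intro x v w
    have hmv : ∀ i, (Matrix.of fun i j => v i * w j + w i * v j).mulVec x i
        = v i * (w ⬝ᵥ x) + w i * (v ⬝ᵥ x) := by
      intro i
      simp only [Matrix.mulVec, dotProduct, Matrix.of_apply]
      rw [Finset.mul_sum, Finset.mul_sum, ← Finset.sum_add_distrib]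
      exact Finset.sum_congr rfl fun j _ => by ring
    calc x ⬝ᵥ (Matrix.of fun i j => v i * w j + w i * v j).mulVec x
        = ∑ i, x i * (v i * (w ⬝ᵥ x) + w i * (v ⬝ᵥ x)) :=
          Finset.sum_congr rfl fun i _ => by rw [hmv i]
      _ = (∑ i, x i * v i) * (w ⬝ᵥ x) + (∑ i, x i * w i) * (v ⬝ᵥ x) := by
          rw [Finset.sum_mul, Finset.sum_mul, ← Finset.sum_add_distrib]
          exact Finset.sum_congr rfl fun i _ => by ring
      _ = 2 * ((x ⬝ᵥ v) * (x ⬝ᵥ w)) := by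
          rw [show (∑ i, x i * v i) = x ⬝ᵥ v from rfl, show (∑ i, x i * w i) = x ⬝ᵥ w from rfl,
            dotProduct_comm w x, dotProduct_comm v x]
          ring
  -- the key polynomial identity
  have key : ∀ v w : Fin p → ℝ,
      μ + (4 * ∑ k, a k * ((γ k ⬝ᵥ v) * (γ k ⬝ᵥ w)) ^ 2
        + 2 * ∑ k, b k * ((γ k ⬝ᵥ v) * (γ k ⬝ᵥ w)))
      = μ' + (4 * ∑ l, c l * ((γ' l ⬝ᵥ v) * (γ' l ⬝ᵥ w)) ^ 2
        + 2 * ∑ l, d l * ((γ' l ⬝ᵥ v) * (γ' l ⬝ᵥ w))) := by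
    intro v w
    have h := heq (Matrix.of fun i j => v i * w j + w i * v j) (hsym v w)
    simp only [hqv] at h
    rw [sum_expand a b (fun k => (γ k ⬝ᵥ v) * (γ k ⬝ᵥ w)),
      sum_expand c d (fun l => (γ' l ⬝ᵥ v) * (γ' l ⬝ᵥ w))] at h
    exact h
  have hPL : ∀ v w : Fin p → ℝ,
      (∑ k, a k * ((γ k ⬝ᵥ v) * (γ k ⬝ᵥ w)) ^ 2
        = ∑ l, c l * ((γ' l ⬝ᵥ v) * (γ' l ⬝ᵥ w)) ^ 2)
      ∧ (∑ k, b k * ((γ k ⬝ᵥ v) * (γ k ⬝ᵥ w))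
        = ∑ l, d l * ((γ' l ⬝ᵥ v) * (γ' l ⬝ᵥ w))) := by
    intro v w
    have h1 := key v w
    have h2 := key v (-w)
    have e1 : ∀ (n : ℕ) (α : Fin n → ℝ) (g : Fin n → Fin p → ℝ),
        ∑ k, α k * ((g k ⬝ᵥ v) * (g k ⬝ᵥ (-w))) ^ 2
          = ∑ k, α k * ((g k ⬝ᵥ v) * (g k ⬝ᵥ w)) ^ 2 := fun n α g =>
      Finset.sum_congr rfl fun k _ => by rw [dotProduct_neg]; ring
    have e2 : ∀ (n : ℕ) (α : Fin n → ℝ) (g : Fin n → Fin p → ℝ),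
        ∑ k, α k * ((g k ⬝ᵥ v) * (g k ⬝ᵥ (-w)))
          = - ∑ k, α k * ((g k ⬝ᵥ v) * (g k ⬝ᵥ w)) := fun n α g => by
      rw [← Finset.sum_neg_distrib]
      exact Finset.sum_congr rfl fun k _ => by rw [dotProduct_neg]; ring
    rw [e1 K a γ, e1 K' c γ', e2 K b γ, e2 K' d γ'] at h2
    constructor <;> linarith [h1, h2, hμ]
  have hP : ∀ v w : Fin p → ℝ,
      ∑ k, a k * ((γ k ⬝ᵥ v) * (γ k ⬝ᵥ w)) ^ 2
        = ∑ l, c l * ((γ' l ⬝ᵥ v) * (γ' l ⬝ᵥ w)) ^ 2 := fun v w => (hPL v w).1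
  have hL : ∀ v w : Fin p → ℝ,
      ∑ k, b k * ((γ k ⬝ᵥ v) * (γ k ⬝ᵥ w))
        = ∑ l, d l * ((γ' l ⬝ᵥ v) * (γ' l ⬝ᵥ w)) := fun v w => (hPL v w).2
  -- the four matching statements
  have ht1 := match_nonzero hd hd' hγu hγ'u a c hP
  have hs1 := match_nonzero hd' hd hγ'u hγu c a (fun v w => (hP v w).symm)
  have ht0 := match_zero hd' hγu hγ'u a b c d hcd ha0 hs1 hL
  have hs0 := match_zero hd hγ'u hγu c d a b hab hc0 ht1 (fun v w => (hL v w).symm)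
  -- the total matching functions
  have hT : ∀ l, ∃ k, ∃ r : ℝ, (r = 1 ∨ r = -1) ∧ γ' l = r • γ k := by
    intro l
    by_cases hcl : c l = 0
    · obtain ⟨k, rr, hrr, hkr, _⟩ := ht0 l hcl
      exact ⟨k, rr, hrr, hkr⟩
    · obtain ⟨k, rr, hrr, hkr, _⟩ := ht1 l hcl
      exact ⟨k, rr, hrr, hkr⟩
  choose t r hr hγt using hT
  have hS : ∀ k, ∃ l, ∃ r : ℝ, (r = 1 ∨ r = -1) ∧ γ k = r • γ' l := by
    intro k
    by_cases hak : a k = 0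
    · obtain ⟨l, rr, hrr, hkr, _⟩ := hs0 k hak
      exact ⟨l, rr, hrr, hkr⟩
    · obtain ⟨l, rr, hrr, hkr, _⟩ := hs1 k hak
      exact ⟨l, rr, hrr, hkr⟩
  choose s ρ hρ hγs using hS
  have hrne : ∀ l, r l ≠ 0 := fun l => by rcases hr l with h | h <;> rw [h] <;> norm_num
  have hρne : ∀ k, ρ k ≠ 0 := fun k => by rcases hρ k with h | h <;> rw [h] <;> norm_num
  -- injectivity of the matchings
  have htinj : Function.Injective t := by
    intro l l' hll
    by_contra hne
    have e1 : γ' l ⬝ᵥ u' l' = r l * (γ (t l) ⬝ᵥ u' l') := by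
      rw [hγt l, smul_dotProduct, smul_eq_mul]
    have e2 : γ' l' ⬝ᵥ u' l' = r l' * (γ (t l) ⬝ᵥ u' l') := by
      rw [hγt l', hll, smul_dotProduct, smul_eq_mul]
    rw [hd'] at e1 e2
    simp only [hne, if_false] at e1
    simp only [eq_self_iff_true, if_true] at e2
    rcases mul_eq_zero.mp e1.symm with h | h
    · exact hrne l h
    · rw [h, mul_zero] at e2
      exact one_ne_zero e2
  have hsinj : Function.Injective s := by
    intro k k' hkk
    by_contra hne
    have e1 : γ k ⬝ᵥ u k' = ρ k * (γ' (s k) ⬝ᵥ u k') := by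
      rw [hγs k, smul_dotProduct, smul_eq_mul]
    have e2 : γ k' ⬝ᵥ u k' = ρ k' * (γ' (s k) ⬝ᵥ u k') := by
      rw [hγs k', hkk, smul_dotProduct, smul_eq_mul]
    rw [hd] at e1 e2
    simp only [hne, if_false] at e1
    simp only [eq_self_iff_true, if_true] at e2
    rcases mul_eq_zero.mp e1.symm with h | h
    · exact hρne k h
    · rw [h, mul_zero] at e2
      exact one_ne_zero e2
  have hKK : K = K' := le_antisymm
    (by simpa using Fintype.card_le_of_injective s hsinj)
    (by simpa using Fintype.card_le_of_injective t htinj)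
  have hbij : Function.Bijective t :=
    (Fintype.bijective_iff_injective_and_card t).mpr ⟨htinj, by simp [hKK]⟩
  refine ⟨hμ, hKK, (Equiv.ofBijective t hbij).symm, fun j => ?_⟩
  set l : Fin K' := (Equiv.ofBijective t hbij).symm j with hldef
  have htl : t l = j := (Equiv.ofBijective t hbij).apply_symm_apply j
  -- dual products of γ' against u j
  have hγlu : γ' l ⬝ᵥ u j = r l := by
    rw [hγt l, htl, smul_dotProduct, smul_eq_mul, hd]
    simp
  have hγl'u : ∀ l', l' ≠ l → γ' l' ⬝ᵥ u j = 0 := by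
    intro l' hl'
    rw [hγt l', smul_dotProduct, smul_eq_mul, hd]
    have hne : t l' ≠ j := fun hh => hl' (htinj (hh.trans htl.symm))
    simp [hne]
  refine ⟨r l, hr l, ?_, ?_, ?_⟩
  · -- γ j = r l • γ' l
    funext i
    have hi := congrFun (hγt l) i
    rw [htl] at hi
    simp only [Pi.smul_apply, smul_eq_mul] at hi ⊢
    rcases hr l with h | h <;> rw [h] at hi ⊢ <;> linarith [hi]
  · -- a j = c l
    have h := hP (u j) (u j)
    rw [Finset.sum_eq_single j (fun k _ hk => by rw [hd]; simp [hk])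
        (fun hj => absurd (Finset.mem_univ j) hj),
      Finset.sum_eq_single l (fun l' _ hl' => by rw [hγl'u l' hl']; ring)
        (fun hll => absurd (Finset.mem_univ l) hll),
      hd, hγlu] at h
    simp only [eq_self_iff_true, if_true, one_mul, mul_one, one_pow] at h
    rcases hr l with hh | hh <;> rw [hh] at h <;> norm_num at h <;> exact h
  · -- b j = d l
    have h := hL (u j) (u j)
    rw [Finset.sum_eq_single j (fun k _ hk => by rw [hd]; simp [hk])
        (fun hj => absurd (Finset.mem_univ j) hj),
      Finset.sum_eq_single l (fun l' _ hl' => by rw [hγl'u l' hl']; ring)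
        (fun hll => absurd (Finset.mem_univ l) hll),
      hd, hγlu] at h
    simp only [eq_self_iff_true, if_true, one_mul, mul_one] at h
    rcases hr l with hh | hh <;> rw [hh] at h <;> norm_num at h <;> exact h
end

section
/- Let p, K, L be positive integers, let a_k, b_k ∈ ℝ and γ_k ∈ ℝ^p with ‖γ_k‖₂ = 1 for k = 1,…,K, and let c_l, d_l ∈ ℝ and γ̃_l ∈ ℝ^p with ‖γ̃_l‖₂ = 1 for l = 1,…,L. If for every symmetric matrix M ∈ ℝ^{p×p}, Σ_{k=1}^{K} (a_k (γ_kᵀMγ_k)² + b_k (γ_kᵀMγ_k)) = Σ_{l=1}^{L} (c_l (γ̃_lᵀMγ̃_l)² + d_l (γ̃_lᵀMγ̃_l)), then Σ_{k=1}^{K} b_k γ_kγ_kᵀ = Σ_{l=1}^{L} d_l γ̃_lγ̃_lᵀ and Σ_{k=1}^{K} a_k γ_kγ_kᵀ = Σ_{l=1}^{L} c_l γ̃_lγ̃_lᵀ. -/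
/-!
Testing the identity against `M` and `-M` separates its even (quadratic) and odd (linear) parts.
Since the vectors are unit, `γᵀ (1 ± M) γ = 1 ± γᵀ M γ`, so comparing the quadratic parts at
`1 + M` and `1 - M` makes the quadratic coefficients appear linearly as well. A linear identity
`∑ w_k γ_kᵀ M γ_k = ∑ w'_l γ'_lᵀ M γ'_l` on all symmetric `M` pins down `∑ w_k γ_k γ_kᵀ`: test it
against `E_ij + E_ji`.
-/

open Matrix Finset

variable {R ι κ n : Type*} [Fintype ι] [Fintype κ]

theorem dotProduct_mulVec_single_add_transpose [CommRing R] [Fintype n] [DecidableEq n]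
    (v : n → R) (i j : n) :
    v ⬝ᵥ (single i j (1 : R) + (single i j (1 : R))ᵀ) *ᵥ v = 2 * (v i * v j) := by
  have h : v ⬝ᵥ single i j (1 : R) *ᵥ v = v i * v j := by
    simp [dotProduct, mulVec, single, mul_ite, ite_mul, ite_and]
  rw [add_mulVec, dotProduct_add, h, dotProduct_mulVec, vecMul_transpose, dotProduct_comm, h]
  ring

theorem sum_mul_one_add_sq_sub_sum_mul_one_sub_sq [CommRing R] (a x : ι → R) :
    ∑ k, a k * (1 + x k) ^ 2 - ∑ k, a k * (1 - x k) ^ 2 = 2 * (2 * ∑ k, a k * x k) := by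
  rw [← sum_sub_distrib, mul_sum, mul_sum]
  exact sum_congr rfl fun k _ => by ring

section Field

variable [Field R] [NeZero (2 : R)]

theorem sum_smul_vecMulVec_eq_of_forall_isSymm [Fintype n] [DecidableEq n]
    {w : ι → R} {w' : κ → R} {v : ι → n → R} {v' : κ → n → R}
    (h : ∀ M : Matrix n n R, M.IsSymm →
      ∑ k, w k * (v k ⬝ᵥ M *ᵥ v k) = ∑ l, w' l * (v' l ⬝ᵥ M *ᵥ v' l)) :
    ∑ k, w k • vecMulVec (v k) (v k) = ∑ l, w' l • vecMulVec (v' l) (v' l) := by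
  ext i j
  have hij := h _ (isSymm_add_transpose_self (single i j (1 : R)))
  simp only [dotProduct_mulVec_single_add_transpose] at hij
  simp only [Matrix.sum_apply, Matrix.smul_apply, vecMulVec_apply, smul_eq_mul]
  apply mul_left_cancel₀ (two_ne_zero : (2 : R) ≠ 0)
  simpa only [mul_sum, mul_left_comm] using hij

theorem sum_mul_sq_eq_and_sum_mul_eq_of_neg {a b x : ι → R} {c d y : κ → R}
    (hpos : ∑ k, (a k * x k ^ 2 + b k * x k) = ∑ l, (c l * y l ^ 2 + d l * y l))
    (hneg : ∑ k, (a k * (-x k) ^ 2 + b k * (-x k)) = ∑ l, (c l * (-y l) ^ 2 + d l * (-y l))) :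
    ∑ k, a k * x k ^ 2 = ∑ l, c l * y l ^ 2 ∧ ∑ k, b k * x k = ∑ l, d l * y l := by
  simp only [neg_sq, mul_neg, ← sub_eq_add_neg, sum_add_distrib, sum_sub_distrib] at hpos hneg
  constructor <;> apply mul_left_cancel₀ (two_ne_zero : (2 : R) ≠ 0)
  · linear_combination hpos + hneg
  · linear_combination hpos - hneg

theorem sum_mul_eq_of_sum_mul_one_add_sq_eq {a x : ι → R} {c y : κ → R}
    (hpos : ∑ k, a k * (1 + x k) ^ 2 = ∑ l, c l * (1 + y l) ^ 2)
    (hneg : ∑ k, a k * (1 - x k) ^ 2 = ∑ l, c l * (1 - y l) ^ 2) :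
    ∑ k, a k * x k = ∑ l, c l * y l := by
  have hx := sum_mul_one_add_sq_sub_sum_mul_one_sub_sq a x
  have hy := sum_mul_one_add_sq_sub_sum_mul_one_sub_sq c y
  apply mul_left_cancel₀ (two_ne_zero : (2 : R) ≠ 0)
  apply mul_left_cancel₀ (two_ne_zero : (2 : R) ≠ 0)
  linear_combination hy - hx + hpos - hneg

end Field

theorem quadratic_case_matrix_identities_general
    {p K L : ℕ}
    (a b : Fin K → ℝ) (c d : Fin L → ℝ)
    (γ : Fin K → Fin p → ℝ) (γ' : Fin L → Fin p → ℝ)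
    (hγu : ∀ k, ∑ i, γ k i ^ 2 = 1) (hγ'u : ∀ l, ∑ i, γ' l i ^ 2 = 1)
    (heq : ∀ M : Matrix (Fin p) (Fin p) ℝ, M.IsSymm →
      ∑ k, (a k * (γ k ⬝ᵥ M.mulVec (γ k)) ^ 2 + b k * (γ k ⬝ᵥ M.mulVec (γ k))) =
      ∑ l, (c l * (γ' l ⬝ᵥ M.mulVec (γ' l)) ^ 2 + d l * (γ' l ⬝ᵥ M.mulVec (γ' l)))) :
    (∑ k, b k • vecMulVec (γ k) (γ k) = ∑ l, d l • vecMulVec (γ' l) (γ' l)) ∧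
    (∑ k, a k • vecMulVec (γ k) (γ k) = ∑ l, c l • vecMulVec (γ' l) (γ' l)) := by
  have hsplit (M : Matrix (Fin p) (Fin p) ℝ) (hM : M.IsSymm) :=
    sum_mul_sq_eq_and_sum_mul_eq_of_neg (heq M hM)
      (by simpa only [neg_mulVec, dotProduct_neg] using heq (-M) hM.neg)
  have hunit : ∀ k, γ k ⬝ᵥ γ k = 1 := by simpa only [dotProduct, sq] using hγu
  have hunit' : ∀ l, γ' l ⬝ᵥ γ' l = 1 := by simpa only [dotProduct, sq] using hγ'u
  refine ⟨sum_smul_vecMulVec_eq_of_forall_isSymm fun M hM => (hsplit M hM).2,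
    sum_smul_vecMulVec_eq_of_forall_isSymm fun M hM => ?_⟩
  apply sum_mul_eq_of_sum_mul_one_add_sq_eq
  · simpa only [add_mulVec, one_mulVec, dotProduct_add, hunit, hunit']
      using (hsplit _ (isSymm_one.add hM)).1
  · simpa only [sub_mulVec, one_mulVec, dotProduct_sub, hunit, hunit']
      using (hsplit _ (isSymm_one.sub hM)).1

/-- The pair of matrix-coefficient identities separating the linear and quadratic parts
in the quadratic case of the identifiability proof. -/
theorem quadratic_case_matrix_identities
    {p K L : ℕ} (hp : 0 < p) (hK : 0 < K) (hL : 0 < L)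
    (a b : Fin K → ℝ) (c d : Fin L → ℝ)
    (γ : Fin K → Fin p → ℝ) (γ' : Fin L → Fin p → ℝ)
    (hγu : ∀ k, ∑ i, γ k i ^ 2 = 1) (hγ'u : ∀ l, ∑ i, γ' l i ^ 2 = 1)
    (heq : ∀ M : Matrix (Fin p) (Fin p) ℝ, M.IsSymm →
      ∑ k, (a k * (γ k ⬝ᵥ M.mulVec (γ k)) ^ 2 + b k * (γ k ⬝ᵥ M.mulVec (γ k))) =
      ∑ l, (c l * (γ' l ⬝ᵥ M.mulVec (γ' l)) ^ 2 + d l * (γ' l ⬝ᵥ M.mulVec (γ' l)))) :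
    (∑ k, b k • vecMulVec (γ k) (γ k) = ∑ l, d l • vecMulVec (γ' l) (γ' l)) ∧
    (∑ k, a k • vecMulVec (γ k) (γ k) = ∑ l, c l • vecMulVec (γ' l) (γ' l)) :=
  quadratic_case_matrix_identities_general a b c d γ γ' hγu hγ'u heq
end

section
/- Let p, K, L be positive integers, let a_k, b_k ∈ ℝ and γ_k ∈ ℝ^p with ‖γ_k‖₂ = 1 for k = 1,…,K, and let c_l, d_l ∈ ℝ and γ̃_l ∈ ℝ^p with ‖γ̃_l‖₂ = 1 for l = 1,…,L. Suppose that for every symmetric matrix M ∈ ℝ^{p×p}, Σ_{k=1}^{K} (a_k (γ_kᵀMγ_k)² + b_k (γ_kᵀMγ_k)) = Σ_{l=1}^{L} (c_l (γ̃_lᵀMγ̃_l)² + d_l (γ̃_lᵀMγ̃_l)). Then for all indices j, j' ∈ {1,…,p}, Σ_{k=1}^{K} a_k γ_{k,j} γ_{k,j'} γ_kγ_kᵀ = Σ_{l=1}^{L} c_l γ̃_{l,j} γ̃_{l,j'} γ̃_lγ̃_lᵀ, where γ_{k,j} denotes the j-th coordinate of γ_k. -/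
/-!
Each `γᵀ M γ` is additive in `M`, so both sides of the hypothesis are "quadratic plus linear"
functions of `M`. Evaluating at `±(X + Y)` and `±(X - Y)` cancels the linear parts and, by
polarization, isolates `∑ₖ aₖ (γₖᵀ X γₖ)(γₖᵀ Y γₖ)`; these cross terms therefore agree on symmetric
`X, Y`. Taking `X = E_{jj'} + E_{j'j}` and `Y = E_{ii'} + E_{i'i}` reads off the `(i, i')` entry of
the `(j, j')` identity.
-/

open Matrix

section Polarization

variable {ι V : Type*} [Fintype ι] [AddCommGroup V]

def quadAddLinear (a b : ι → ℝ) (q : ι → V →+ ℝ) (v : V) : ℝ :=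
  ∑ k, (a k * q k v ^ 2 + b k * q k v)

theorem eight_mul_sum_mul_map_mul_map (a b : ι → ℝ) (q : ι → V →+ ℝ) (x y : V) :
    8 * ∑ k, a k * (q k x * q k y) =
      quadAddLinear a b q (x + y) + quadAddLinear a b q (-(x + y)) -
        quadAddLinear a b q (x - y) - quadAddLinear a b q (-(x - y)) := by
  simp only [quadAddLinear, map_add, map_sub, map_neg, Finset.mul_sum,
    ← Finset.sum_add_distrib, ← Finset.sum_sub_distrib]
  exact Finset.sum_congr rfl fun k _ => by ring

theorem sum_mul_map_mul_map_eq_of_eqOn {κ : Type*} [Fintype κ] {S : AddSubgroup V}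
    {a b : ι → ℝ} {c d : κ → ℝ} {q : ι → V →+ ℝ} {q' : κ → V →+ ℝ}
    (heq : ∀ v ∈ S, quadAddLinear a b q v = quadAddLinear c d q' v)
    {x y : V} (hx : x ∈ S) (hy : y ∈ S) :
    ∑ k, a k * (q k x * q k y) = ∑ l, c l * (q' l x * q' l y) := by
  have hadd := S.add_mem hx hy
  have hsub := S.sub_mem hx hy
  have := eight_mul_sum_mul_map_mul_map a b q x y
  rw [heq _ hadd, heq _ (S.neg_mem hadd), heq _ hsub, heq _ (S.neg_mem hsub),
    ← eight_mul_sum_mul_map_mul_map] at this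
  linarith

end Polarization

namespace Matrix

def symmetricAddSubgroup (n R : Type*) [AddGroup R] : AddSubgroup (Matrix n n R) where
  carrier := {M | M.IsSymm}
  add_mem' := IsSymm.add
  zero_mem' := isSymm_zero
  neg_mem' := IsSymm.neg

variable {n R : Type*}

@[simps]
def quadEval [Fintype n] [NonUnitalNonAssocSemiring R] (v : n → R) : Matrix n n R →+ R where
  toFun M := v ⬝ᵥ M *ᵥ v
  map_zero' := by simp
  map_add' M N := by simp [add_mulVec, dotProduct_add]

variable [DecidableEq n]

theorem isSymm_single_add_single [AddCommMonoid R] (i j : n) (c : R) :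
    (single i j c + single j i c).IsSymm := by
  simpa using isSymm_add_transpose_self (single i j c)

theorem dotProduct_mulVec_single_add_single [Fintype n] [CommSemiring R] (v : n → R) (i j : n) :
    v ⬝ᵥ (single i j 1 + single j i 1) *ᵥ v = 2 * (v i * v j) := by
  simp only [add_mulVec, dotProduct_add, single_mulVec_eq, dotProduct_smul, dotProduct_single,
    smul_eq_mul]
  ring

end Matrix

theorem quadratic_case_entrywise_matrix_identities_general
    {p K L : ℕ}
    (a b : Fin K → ℝ) (c d : Fin L → ℝ)
    (γ : Fin K → Fin p → ℝ) (γ' : Fin L → Fin p → ℝ)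
    (heq : ∀ M : Matrix (Fin p) (Fin p) ℝ, M.IsSymm →
      ∑ k, (a k * (γ k ⬝ᵥ M.mulVec (γ k)) ^ 2 + b k * (γ k ⬝ᵥ M.mulVec (γ k))) =
      ∑ l, (c l * (γ' l ⬝ᵥ M.mulVec (γ' l)) ^ 2 + d l * (γ' l ⬝ᵥ M.mulVec (γ' l)))) :
    ∀ j j' : Fin p,
      ∑ k, (a k * γ k j * γ k j') • vecMulVec (γ k) (γ k) =
      ∑ l, (c l * γ' l j * γ' l j') • vecMulVec (γ' l) (γ' l) := by
  intro j j'
  ext i i'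
  have cross := sum_mul_map_mul_map_eq_of_eqOn (S := symmetricAddSubgroup (Fin p) ℝ)
    (q := fun k => quadEval (γ k))
    (q' := fun l => quadEval (γ' l)) heq
    (isSymm_single_add_single j j' 1) (isSymm_single_add_single i i' 1)
  simp only [quadEval_apply, dotProduct_mulVec_single_add_single] at cross
  simp only [Matrix.sum_apply, Matrix.smul_apply, vecMulVec_apply, smul_eq_mul]
  have four_mul (w : ℝ) (u : Fin p → ℝ) :
      w * (2 * (u j * u j') * (2 * (u i * u i'))) = 4 * (w * u j * u j' * (u i * u i')) := by
    ring
  simp only [four_mul, ← Finset.mul_sum] at cross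
  exact mul_left_cancel₀ four_ne_zero cross

/-- The family of matrix identities, one for each entry pair `(j, j')`, obtained in the
quadratic case of the identifiability proof by differentiating the additive-index
identity with respect to the symmetric matrix argument and evaluating at elementary
symmetric matrices. -/
theorem quadratic_case_entrywise_matrix_identities
    {p K L : ℕ} (hp : 0 < p) (hK : 0 < K) (hL : 0 < L)
    (a b : Fin K → ℝ) (c d : Fin L → ℝ)
    (γ : Fin K → Fin p → ℝ) (γ' : Fin L → Fin p → ℝ)
    (hγu : ∀ k, ∑ i, γ k i ^ 2 = 1) (hγ'u : ∀ l, ∑ i, γ' l i ^ 2 = 1)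
    (heq : ∀ M : Matrix (Fin p) (Fin p) ℝ, M.IsSymm →
      ∑ k, (a k * (γ k ⬝ᵥ M.mulVec (γ k)) ^ 2 + b k * (γ k ⬝ᵥ M.mulVec (γ k))) =
      ∑ l, (c l * (γ' l ⬝ᵥ M.mulVec (γ' l)) ^ 2 + d l * (γ' l ⬝ᵥ M.mulVec (γ' l)))) :
    ∀ j j' : Fin p,
      ∑ k, (a k * γ k j * γ k j') • vecMulVec (γ k) (γ k) =
      ∑ l, (c l * γ' l j * γ' l j') • vecMulVec (γ' l) (γ' l) :=
  quadratic_case_entrywise_matrix_identities_general a b c d γ γ' heq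
end
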